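/- There exists a universal constant C such that for every a ∈ ℝ with |||a||| > 0 and every p ∈ [−π,π]³ with e(p) = a (so that s₁²+s₂²+s₃² > 0), the Gauss curvature and mean curvature of Σ_a at p satisfy |K(p)| ≤ C / |||a||| and |H(p)| ≤ C / |||a|||^{1/2}. -/

import Mathlib

/-!
Write `tᵢ = 1 - cos pᵢ ∈ [0, 2]`, so that `e(p) = ∑ tᵢ` and `sᵢ² = tᵢ (2 - tᵢ)`. Rounding each `tᵢ`
to the nearer of `0` and `2` moves it by at most `tᵢ (2 - tᵢ)`, and the rounded values sum to one
of `0, 2, 4, 6`; hence `|||e(p)||| ≤ s₁² + s₂² + s₃²`. Since `|cᵢ| ≤ 1`, the numerators `M(p)` and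
`∑ sᵢ² cᵢ` are bounded by `s₁² + s₂² + s₃²`, which gives `|K| ≤ 1/|||a|||` and `|H| ≤ 4/|||a|||^{1/2}`.
-/

open Real

noncomputable section

/-- The dispersion relation `e(p) = ∑ (1 - cos pⱼ)`. -/
def e3 (p : Fin 3 → ℝ) : ℝ := ∑ i, (1 - Real.cos (p i))

/-- `ssum p = s₁² + s₂² + s₃²`. -/
def ssum (p : Fin 3 → ℝ) : ℝ := ∑ i, Real.sin (p i) ^ 2

/-- `M(p) = s₁²c₂c₃ + s₂²c₁c₃ + s₃²c₁c₂`. -/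
def Mf (p : Fin 3 → ℝ) : ℝ :=
  Real.sin (p 0) ^ 2 * Real.cos (p 1) * Real.cos (p 2) +
  Real.sin (p 1) ^ 2 * Real.cos (p 0) * Real.cos (p 2) +
  Real.sin (p 2) ^ 2 * Real.cos (p 0) * Real.cos (p 1)

/-- Gauss curvature `K(p) = M(p)/(s₁²+s₂²+s₃²)²`. -/
def Kf (p : Fin 3 → ℝ) : ℝ := Mf p / (ssum p) ^ 2

/-- Mean curvature
`H(p) = (s₁²+s₂²+s₃²)^{−1/2} (3−a − (s₁²c₁+s₂²c₂+s₃²c₃)/(s₁²+s₂²+s₃²))` with `a = e(p)`. -/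
def Hf (p : Fin 3 → ℝ) : ℝ :=
  (3 - e3 p - (∑ i, Real.sin (p i) ^ 2 * Real.cos (p i)) / ssum p) / Real.sqrt (ssum p)

/-- `|||α||| = min{|α|, |α−2|, |α−3|, |α−4|, |α−6|}`. -/
def tri (α : ℝ) : ℝ := min |α| (min |α - 2| (min |α - 3| (min |α - 4| |α - 6|)))

theorem exists_abs_one_sub_cos_sub_two_mul_le (x : ℝ) :
    ∃ j : ℕ, j ≤ 1 ∧ |1 - cos x - 2 * j| ≤ sin x ^ 2 := by
  have hsin : sin x ^ 2 = (1 - cos x) * (1 + cos x) := by rw [sin_sq]; ring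
  have hc₁ := cos_le_one x
  have hc₂ := neg_one_le_cos x
  rcases le_total 0 (cos x) with hc | hc
  · refine ⟨0, zero_le_one, ?_⟩
    rw [hsin, Nat.cast_zero, mul_zero, sub_zero, abs_of_nonneg (by linarith)]
    nlinarith
  · refine ⟨1, le_rfl, ?_⟩
    rw [hsin, Nat.cast_one, mul_one, abs_of_nonpos (by linarith)]
    nlinarith

theorem exists_abs_sum_one_sub_cos_sub_two_mul_le {ι : Type*} (s : Finset ι) (p : ι → ℝ) :
    ∃ k : ℕ, k ≤ s.card ∧
      |∑ i ∈ s, (1 - cos (p i)) - 2 * k| ≤ ∑ i ∈ s, sin (p i) ^ 2 := by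
  induction s using Finset.cons_induction with
  | empty => exact ⟨0, le_rfl, by simp⟩
  | cons i s hi ih =>
    obtain ⟨k, hk, hks⟩ := ih
    obtain ⟨j, hj, hji⟩ := exists_abs_one_sub_cos_sub_two_mul_le (p i)
    refine ⟨j + k, by rw [Finset.card_cons]; omega, ?_⟩
    rw [Finset.sum_cons, Finset.sum_cons]
    calc |1 - cos (p i) + ∑ i ∈ s, (1 - cos (p i)) - 2 * ↑(j + k)|
        = |(1 - cos (p i) - 2 * j) + (∑ i ∈ s, (1 - cos (p i)) - 2 * k)| := by
          push_cast; ring_nf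
      _ ≤ |1 - cos (p i) - 2 * j| + |∑ i ∈ s, (1 - cos (p i)) - 2 * k| := abs_add_le _ _
      _ ≤ sin (p i) ^ 2 + ∑ i ∈ s, sin (p i) ^ 2 := add_le_add hji hks

theorem tri_le_abs_sub_two_mul (α : ℝ) {k : ℕ} (hk : k ≤ 3) : tri α ≤ |α - 2 * k| := by
  unfold tri
  interval_cases k <;> norm_num

theorem tri_e3_le_ssum (p : Fin 3 → ℝ) : tri (e3 p) ≤ ssum p := by
  obtain ⟨k, hk, hek⟩ := exists_abs_sum_one_sub_cos_sub_two_mul_le Finset.univ p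
  exact (tri_le_abs_sub_two_mul _ (by simpa using hk)).trans hek

theorem abs_sin_sq_mul_cos_le (x y : ℝ) : |sin x ^ 2 * cos y| ≤ sin x ^ 2 := by
  rw [abs_mul, abs_sq]
  exact mul_le_of_le_one_right (sq_nonneg _) (abs_cos_le_one y)

theorem abs_Mf_le_ssum (p : Fin 3 → ℝ) : |Mf p| ≤ ssum p := by
  have h (i j k : Fin 3) : |sin (p i) ^ 2 * cos (p j) * cos (p k)| ≤ sin (p i) ^ 2 := by
    rw [mul_assoc, abs_mul, abs_sq, abs_mul]
    exact mul_le_of_le_one_right (sq_nonneg _)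
      (mul_le_one₀ (abs_cos_le_one _) (abs_nonneg _) (abs_cos_le_one _))
  rw [Mf, ssum, Fin.sum_univ_three]
  exact (abs_add_three _ _ _).trans (add_le_add_three (h 0 1 2) (h 1 0 2) (h 2 0 1))

theorem abs_sum_sin_sq_mul_cos_le_ssum (p : Fin 3 → ℝ) :
    |∑ i, sin (p i) ^ 2 * cos (p i)| ≤ ssum p :=
  (Finset.abs_sum_le_sum_abs _ _).trans <|
    Finset.sum_le_sum fun i _ ↦ abs_sin_sq_mul_cos_le (p i) (p i)

theorem e3_mem_Icc (p : Fin 3 → ℝ) : e3 p ∈ Set.Icc 0 6 := by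
  have h (i : Fin 3) : 1 - cos (p i) ∈ Set.Icc 0 2 :=
    ⟨by linarith [cos_le_one (p i)], by linarith [neg_one_le_cos (p i)]⟩
  rw [e3, Fin.sum_univ_three]
  constructor <;> linarith [(h 0).1, (h 0).2, (h 1).1, (h 1).2, (h 2).1, (h 2).2]

theorem abs_Kf_le_inv_ssum (p : Fin 3 → ℝ) : |Kf p| ≤ (ssum p)⁻¹ :=
  calc |Kf p| = |Mf p| / ssum p ^ 2 := by rw [Kf, abs_div, abs_sq]
    _ ≤ ssum p / ssum p ^ 2 := by gcongr; exact abs_Mf_le_ssum p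
    _ = (ssum p)⁻¹ := by rw [sq, div_self_mul_self']

theorem abs_Hf_le (p : Fin 3 → ℝ) : |Hf p| ≤ 4 / √(ssum p) := by
  have hS : |(∑ i, sin (p i) ^ 2 * cos (p i)) / ssum p| ≤ 1 := by
    rw [abs_div]
    exact div_le_one_of_le₀ ((abs_sum_sin_sq_mul_cos_le_ssum p).trans (le_abs_self _))
      (abs_nonneg _)
  have he := e3_mem_Icc p
  rw [Hf, abs_div, abs_of_nonneg (sqrt_nonneg _)]
  gcongr
  rw [abs_le] at hS ⊢
  constructor <;> linarith [he.1, he.2, hS.1, hS.2]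

/-- For `a` with `|||a||| > 0` and `p ∈ [−π,π]³` with `e(p) = a`, one has `ssum p > 0`,
`|K(p)| ≤ C/|||a|||` and `|H(p)| ≤ C/|||a|||^{1/2}` for a universal constant `C`. -/
theorem stmt9 :
    ∃ C : ℝ, 0 < C ∧ ∀ a : ℝ, 0 < tri a → ∀ p : Fin 3 → ℝ, (∀ i, |p i| ≤ π) → e3 p = a →
      0 < ssum p ∧ |Kf p| ≤ C / tri a ∧ |Hf p| ≤ C / Real.sqrt (tri a) := by
  refine ⟨4, by norm_num, ?_⟩
  rintro a ha p - rfl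
  have hss := tri_e3_le_ssum p
  refine ⟨ha.trans_le hss, ?_, ?_⟩
  · calc |Kf p| ≤ (ssum p)⁻¹ := abs_Kf_le_inv_ssum p
      _ ≤ (tri (e3 p))⁻¹ := inv_anti₀ ha hss
      _ ≤ 4 / tri (e3 p) := by rw [inv_eq_one_div]; gcongr; norm_num
  · calc |Hf p| ≤ 4 / √(ssum p) := abs_Hf_le p
      _ ≤ 4 / √(tri (e3 p)) := by gcongr
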